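/- If a C^{1+bv} diffeomorphism f of [0,1] is distorted in the group of C^{1+bv} diffeomorphisms of [0,1], then its asymptotic distortion vanishes: lim_{n→∞} var(log Df^n)/n = 0. -/

import Mathlib

/-!
Restricted to increasing diffeomorphisms of `[0,1]`, the chain rule
`log D(u ∘ v) = log Du ∘ v + log Dv` together with the invariance of total variation under
monotone reparametrisation makes `g ↦ var(log Dg)` subadditive. Hence
`var(log Df^n) ≤ C · ‖f^n‖_S`, where `C` bounds this quantity on `S ∪ S⁻¹`, and dividing by `n`
the distortion hypothesis sends the right-hand side to `0`.
-/

open Filter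

noncomputable def wordLength {G : Type*} [Group G] (S : Set G) (g : G) : ℕ :=
  sInf {n | ∃ l : List G, l.length = n ∧ (∀ x ∈ l, x ∈ S ∨ x⁻¹ ∈ S) ∧ l.prod = g}

/-- Total variation of the logarithm of the derivative of `h`, as a map of `[0,1]`. -/
noncomputable def varLogDeriv (h : ℝ → ℝ) : ENNReal :=
  eVariationOn (fun x => Real.log (derivWithin h (Set.Icc (0 : ℝ) 1) x)) (Set.Icc 0 1)

open Set Topology
open scoped ENNReal NNReal

theorem HasDerivWithinAt.of_local_left_inverse {𝕜 : Type*} [NontriviallyNormedField 𝕜]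
    {f g : 𝕜 → 𝕜} {f' a : 𝕜} {s t : Set 𝕜} (hg : Tendsto g (𝓝[s] a) (𝓝[t] (g a)))
    (hf : HasDerivWithinAt f f' t (g a)) (hf' : f' ≠ 0) (ha : a ∈ s)
    (hfg : ∀ᶠ x in 𝓝[s] a, f (g x) = x) : HasDerivWithinAt g f'⁻¹ s a :=
  HasFDerivWithinAt.of_local_left_inverse
    (f' := ContinuousLinearEquiv.unitsEquivAut 𝕜 (Units.mk0 f' hf')) hg hf ha hfg

namespace Equiv

variable {α β : Type*} [LinearOrder α] [LinearOrder β] (e : α ≃ β) {s : Set α} {t : Set β}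

theorem strictMonoOn_symm (hmono : StrictMonoOn e s) (himage : e '' s = t) :
    StrictMonoOn e.symm t := by
  rintro _ hx _ hy hxy
  rw [← himage] at hx hy
  obtain ⟨x, hx, rfl⟩ := hx
  obtain ⟨y, hy, rfl⟩ := hy
  simpa [hmono.lt_iff_lt hx hy] using hxy

theorem continuousOn_symm_of_strictMonoOn [TopologicalSpace α] [OrderTopology α]
    [TopologicalSpace β] [OrderTopology β] [s.OrdConnected] [t.OrdConnected]
    (hmono : StrictMonoOn e s) (himage : e '' s = t) : ContinuousOn e.symm t := by
  let E : s ≃o t := (hmono.orderIso e s).trans (OrderIso.setCongr _ _ himage)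
  have hE : t.domRestrict e.symm = (↑) ∘ E.symm := by
    funext y
    apply e.injective
    simp only [domRestrict_apply, apply_symm_apply, Function.comp_apply]
    exact congrArg Subtype.val (E.apply_symm_apply y).symm
  rw [continuousOn_iff_continuous_domRestrict, hE]
  exact continuous_subtype_val.comp E.symm.continuous

end Equiv

theorem eVariationOn.add_le {α E : Type*} [LinearOrder α] [SeminormedAddCommGroup E]
    (f g : α → E) (s : Set α) :
    eVariationOn (f + g) s ≤ eVariationOn f s + eVariationOn g s := by
  refine iSup_le fun ⟨n, u, hu, us⟩ => ?_
  calc ∑ i ∈ Finset.range n, edist ((f + g) (u (i + 1))) ((f + g) (u i))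
      ≤ ∑ i ∈ Finset.range n,
          (edist (f (u (i + 1))) (f (u i)) + edist (g (u (i + 1))) (g (u i))) :=
        Finset.sum_le_sum fun i _ => edist_add_add_le _ _ _ _
    _ ≤ eVariationOn f s + eVariationOn g s := by
        rw [Finset.sum_add_distrib]
        exact add_le_add (eVariationOn.sum_le hu us) (eVariationOn.sum_le hu us)

theorem Set.Finite.exists_forall_le_coe {ι : Type*} {S : Set ι} (hS : S.Finite)
    {φ : ι → ℝ≥0∞} (hφ : ∀ i ∈ S, φ i ≠ ⊤) : ∃ C : ℝ≥0, ∀ i ∈ S, φ i ≤ C := by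
  have := hS.to_subtype
  obtain ⟨C, hC⟩ := _root_.Finite.exists_le fun i : S => (φ i).toNNReal
  exact ⟨C, fun i hi => (ENNReal.toNNReal_le_toNNReal (hφ i hi) ENNReal.coe_ne_top).1 (hC ⟨i, hi⟩)⟩

section WordLength

variable {G : Type*} [Group G]

theorem apply_list_prod_le_length_mul (H : Subgroup G) {φ : G → ℝ≥0∞} (hφ_one : φ 1 = 0)
    (hφ_mul : ∀ x ∈ H, ∀ y ∈ H, φ (x * y) ≤ φ x + φ y) {C : ℝ≥0∞} :
    ∀ l : List G, (∀ x ∈ l, x ∈ H ∧ φ x ≤ C) → φ l.prod ≤ l.length * C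
  | [], _ => by simp [hφ_one]
  | a :: l, hl => by
    have ha := hl a List.mem_cons_self
    have hl' : ∀ x ∈ l, x ∈ H ∧ φ x ≤ C := fun x hx => hl x (List.mem_cons_of_mem a hx)
    calc φ (a * l.prod) ≤ φ a + φ l.prod :=
          hφ_mul a ha.1 _ (H.list_prod_mem fun x hx => (hl' x hx).1)
      _ ≤ C + l.length * C := add_le_add ha.2 (apply_list_prod_le_length_mul H hφ_one hφ_mul l hl')
      _ = (a :: l).length * C := by push_cast [List.length_cons]; ring

variable {S : Set G}

theorem exists_list_length_eq_wordLength {g : G} (hg : g ∈ Subgroup.closure S) :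
    ∃ l : List G, l.length = wordLength S g ∧ (∀ x ∈ l, x ∈ S ∨ x⁻¹ ∈ S) ∧ l.prod = g := by
  have hwords :
      {n | ∃ l : List G, l.length = n ∧ (∀ x ∈ l, x ∈ S ∨ x⁻¹ ∈ S) ∧ l.prod = g}.Nonempty := by
    rw [← Subgroup.mem_toSubmonoid, Subgroup.closure_toSubmonoid] at hg
    obtain ⟨l, hl, hprod⟩ := Submonoid.exists_list_of_mem_closure hg
    exact ⟨l.length, l, rfl, hl, hprod⟩
  exact Nat.sInf_mem hwords

theorem apply_le_wordLength_mul (H : Subgroup G) {φ : G → ℝ≥0∞} (hφ_one : φ 1 = 0)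
    (hφ_mul : ∀ x ∈ H, ∀ y ∈ H, φ (x * y) ≤ φ x + φ y) (hSH : S ⊆ H) {C : ℝ≥0∞}
    (hC : ∀ s ∈ S, φ s ≤ C ∧ φ s⁻¹ ≤ C) {g : G} (hg : g ∈ Subgroup.closure S) :
    φ g ≤ wordLength S g * C := by
  obtain ⟨l, hlen, hl, rfl⟩ := exists_list_length_eq_wordLength hg
  rw [← hlen]
  refine apply_list_prod_le_length_mul H hφ_one hφ_mul l fun x hx => ?_
  rcases hl x hx with hxS | hxS
  · exact ⟨hSH hxS, (hC x hxS).1⟩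
  · exact ⟨inv_mem_iff.1 (hSH hxS), inv_inv x ▸ (hC _ hxS).2⟩

end WordLength

local notation "𝕀" => Set.Icc (0 : ℝ) 1

theorem derivWithin_id_unitInterval {x : ℝ} (hx : x ∈ 𝕀) : derivWithin id 𝕀 x = 1 :=
  derivWithin_id x 𝕀 (uniqueDiffOn_Icc zero_lt_one x hx)

def IsDiffeoUnitInterval (u : ℝ → ℝ) : Prop :=
  BijOn u 𝕀 𝕀 ∧ StrictMonoOn u 𝕀 ∧ DifferentiableOn ℝ u 𝕀 ∧ ∀ x ∈ 𝕀, 0 < derivWithin u 𝕀 x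

namespace IsDiffeoUnitInterval

protected theorem id : IsDiffeoUnitInterval id :=
  ⟨bijOn_id _, strictMono_id.strictMonoOn _, differentiableOn_id,
    fun _ hx => (derivWithin_id_unitInterval hx).symm ▸ zero_lt_one⟩

variable {u v : ℝ → ℝ}

theorem derivWithin_comp (hu : IsDiffeoUnitInterval u) (hv : IsDiffeoUnitInterval v) {x : ℝ}
    (hx : x ∈ 𝕀) : derivWithin (u ∘ v) 𝕀 x = derivWithin u 𝕀 (v x) * derivWithin v 𝕀 x :=
  _root_.derivWithin_comp x (hu.2.2.1 _ (hv.1.mapsTo hx)) (hv.2.2.1 x hx) hv.1.mapsTo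

theorem comp (hu : IsDiffeoUnitInterval u) (hv : IsDiffeoUnitInterval v) :
    IsDiffeoUnitInterval (u ∘ v) :=
  ⟨hu.1.comp hv.1, hu.2.1.comp hv.2.1 hv.1.mapsTo, hu.2.2.1.comp hv.2.2.1 hv.1.mapsTo,
    fun x hx => hu.derivWithin_comp hv hx ▸ mul_pos (hu.2.2.2 _ (hv.1.mapsTo hx)) (hv.2.2.2 x hx)⟩

theorem hasDerivWithinAt_symm {e : ℝ ≃ ℝ} (he : IsDiffeoUnitInterval e) {y : ℝ} (hy : y ∈ 𝕀) :
    HasDerivWithinAt e.symm (derivWithin e 𝕀 (e.symm y))⁻¹ 𝕀 y := by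
  obtain ⟨hbij, hmono, hdiff, hpos⟩ := he
  have hmaps : MapsTo e.symm 𝕀 𝕀 := (hbij.symm e.invOn).mapsTo
  exact HasDerivWithinAt.of_local_left_inverse
    ((e.continuousOn_symm_of_strictMonoOn hmono hbij.image_eq y hy).tendsto_nhdsWithin hmaps)
    (hdiff _ (hmaps hy)).hasDerivWithinAt (hpos _ (hmaps hy)).ne' hy
    (Eventually.of_forall e.apply_symm_apply)

theorem equiv_symm {e : ℝ ≃ ℝ} (he : IsDiffeoUnitInterval e) : IsDiffeoUnitInterval e.symm := by
  have hbij : BijOn e.symm 𝕀 𝕀 := he.1.symm e.invOn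
  refine ⟨hbij, e.strictMonoOn_symm he.2.1 he.1.image_eq,
    fun y hy => (he.hasDerivWithinAt_symm hy).differentiableWithinAt, fun y hy => ?_⟩
  rw [(he.hasDerivWithinAt_symm hy).derivWithin (uniqueDiffOn_Icc zero_lt_one y hy)]
  exact inv_pos.2 (he.2.2.2 _ (hbij.mapsTo hy))

theorem varLogDeriv_comp_le (hu : IsDiffeoUnitInterval u) (hv : IsDiffeoUnitInterval v) :
    varLogDeriv (u ∘ v) ≤ varLogDeriv u + varLogDeriv v := by
  have hchain : EqOn (fun x => Real.log (derivWithin (u ∘ v) 𝕀 x))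
      ((fun x => Real.log (derivWithin u 𝕀 x)) ∘ v + fun x => Real.log (derivWithin v 𝕀 x)) 𝕀 :=
    fun x hx => by
      simp only [Pi.add_apply, Function.comp_apply]
      rw [hu.derivWithin_comp hv hx,
        Real.log_mul (hu.2.2.2 _ (hv.1.mapsTo hx)).ne' (hv.2.2.2 x hx).ne']
  calc varLogDeriv (u ∘ v)
      ≤ eVariationOn ((fun x => Real.log (derivWithin u 𝕀 x)) ∘ v) 𝕀 + varLogDeriv v :=
        (eVariationOn.eq_of_eqOn hchain).trans_le (eVariationOn.add_le _ _ _)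
    _ ≤ varLogDeriv u + varLogDeriv v := by
        gcongr
        exact eVariationOn.comp_le_of_monotoneOn _ v hv.2.1.monotoneOn hv.1.mapsTo

end IsDiffeoUnitInterval

theorem varLogDeriv_id : varLogDeriv id = 0 := by
  refine (eVariationOn.eq_of_eqOn (f' := fun _ => 0) fun x hx => ?_).trans ?_
  · simp [derivWithin_id_unitInterval hx]
  · exact eVariationOn.constant_on (by simp)

def diffeoUnitInterval : Subgroup (Equiv.Perm ℝ) where
  carrier := {u | IsDiffeoUnitInterval u}
  mul_mem' := IsDiffeoUnitInterval.comp
  one_mem' := IsDiffeoUnitInterval.id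
  inv_mem' := IsDiffeoUnitInterval.equiv_symm

theorem asymptotic_distortion_vanishes_of_distorted (S : Set (Equiv.Perm ℝ)) (hS : S.Finite)
    (hgen : ∀ u ∈ S,
      Set.BijOn ⇑u (Set.Icc (0 : ℝ) 1) (Set.Icc 0 1) ∧
      StrictMonoOn ⇑u (Set.Icc (0 : ℝ) 1) ∧
      DifferentiableOn ℝ ⇑u (Set.Icc (0 : ℝ) 1) ∧
      (∀ x ∈ Set.Icc (0 : ℝ) 1, 0 < derivWithin ⇑u (Set.Icc (0 : ℝ) 1) x) ∧
      varLogDeriv ⇑u ≠ ⊤ ∧ varLogDeriv ⇑u⁻¹ ≠ ⊤)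
    (f : Equiv.Perm ℝ) (hf : f ∈ Subgroup.closure S)
    (hdist : Tendsto (fun n : ℕ => (wordLength S (f ^ n) : ℝ) / n) atTop (nhds 0)) :
    Tendsto (fun n : ℕ => (varLogDeriv ⇑(f ^ n)).toReal / n) atTop (nhds 0) := by
  have hSdiffeo : S ⊆ diffeoUnitInterval := fun u hu =>
    let ⟨hbij, hmono, hdiff, hpos, _⟩ := hgen u hu
    ⟨hbij, hmono, hdiff, hpos⟩
  obtain ⟨C, hC⟩ := hS.exists_forall_le_coe (φ := fun u => max (varLogDeriv u) (varLogDeriv ⇑u⁻¹))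
    fun u hu => max_ne_top (hgen u hu).2.2.2.2.1 (hgen u hu).2.2.2.2.2
  have hbound (n : ℕ) : (varLogDeriv ⇑(f ^ n)).toReal ≤ wordLength S (f ^ n) * C := by
    have hvar := apply_le_wordLength_mul diffeoUnitInterval (φ := fun u => varLogDeriv u) varLogDeriv_id
      (fun _ hx _ hy => IsDiffeoUnitInterval.varLogDeriv_comp_le hx hy) hSdiffeo
      (fun u hu => max_le_iff.1 (hC u hu)) (pow_mem hf n)
    exact ENNReal.toReal_le_of_le_ofReal (by positivity) (by simpa using hvar)
  refine squeeze_zero (fun n => by positivity) (fun n => ?_)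
    (by simpa using hdist.mul_const (C : ℝ))
  calc (varLogDeriv ⇑(f ^ n)).toReal / n ≤ wordLength S (f ^ n) * C / n := by
        gcongr; exact hbound n
    _ = wordLength S (f ^ n) / n * C := by ring
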